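/- arXiv:1212.3776 — 7 statements merged into one kernel-verified Lean document; each statement's English description precedes it below -/
import Mathlib

section
/- Let E be a closed preordered space (a topological space equipped with a preorder whose graph is closed in E × E). Then for every compact set K ⊆ E, the decreasing hull d(K) and the increasing hull i(K) are closed sets in E. -/
/-- The increasing hull `i(S) = {y | ∃ x ∈ S, x ≤ y}`. -/
def incHull {E : Type*} [Preorder E] (S : Set E) : Set E := {y | ∃ x ∈ S, x ≤ y}

/-- The decreasing hull `d(S) = {y | ∃ x ∈ S, y ≤ x}`. -/
def decHull {E : Type*} [Preorder E] (S : Set E) : Set E := {y | ∃ x ∈ S, y ≤ x}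

/-- In a closed preordered space, the decreasing and increasing hulls of a
compact set are closed. -/
theorem hulls_of_compact_isClosed {E : Type*} [TopologicalSpace E] [Preorder E]
    (hG : IsClosed {p : E × E | p.1 ≤ p.2})
    (K : Set E) (hK : IsCompact K) :
    IsClosed (decHull K) ∧ IsClosed (incHull K) :=
  ⟨IsClosed.relPreimage_of_isCompact (s := {p : E × E | p.1 ≤ p.2}) hG hK,
    IsClosed.relImage_of_isCompact (s := {p : E × E | p.1 ≤ p.2}) hG hK⟩
end

section
/- Let E be a compact closed preordered space. If F ⊆ E is an increasing set, V ⊆ E is an open set, and F ⊆ V, then there exists an open increasing set W with F ⊆ W ⊆ V. Dually, if F is a decreasing set contained in an open set V, there exists an open decreasing set W with F ⊆ W ⊆ V. -/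
/-!
If `uᶜ` is compact and `s ⊆ u` is an upper set, take `t` to be the complement
of the lower closure of `uᶜ`. It is an upper set squeezed between `s` and `u`, and it is open
because the lower closure of a compact set is closed when the graph of `≤` is closed: it is the
projection of the closed set `{(x, y) | x ≤ y, y ∈ uᶜ}` along the compact factor.
-/

open Set

section OrderClosedTopology

variable {α : Type*} [TopologicalSpace α] [Preorder α] [OrderClosedTopology α] {s u : Set α}

theorem IsCompact.isClosed_lowerClosure (hs : IsCompact s) :
    IsClosed (lowerClosure s : Set α) := by
  have := isCompact_iff_compactSpace.mp hs
  have hproj : (lowerClosure s : Set α) = Prod.fst '' {p : α × s | p.1 ≤ p.2} := by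
    ext x
    simp [mem_lowerClosure]
  rw [hproj]
  exact isClosedMap_fst_of_compactSpace _
    (isClosed_le continuous_fst (continuous_subtype_val.comp continuous_snd))

theorem IsUpperSet.exists_isOpen_isUpperSet_subset (hs : IsUpperSet s) (huc : IsCompact uᶜ)
    (hsu : s ⊆ u) :
    ∃ t, IsOpen t ∧ IsUpperSet t ∧ s ⊆ t ∧ t ⊆ u := by
  refine ⟨(lowerClosure uᶜ : Set α)ᶜ, huc.isClosed_lowerClosure.isOpen_compl,
    (lowerClosure uᶜ).lower.compl, ?_, compl_subset_comm.mp subset_lowerClosure⟩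
  rw [subset_compl_iff_disjoint_right, hs.disjoint_lowerClosure_right]
  exact disjoint_compl_right_iff_subset.mpr hsu

theorem IsLowerSet.exists_isOpen_isLowerSet_subset (hs : IsLowerSet s) (huc : IsCompact uᶜ)
    (hsu : s ⊆ u) :
    ∃ t, IsOpen t ∧ IsLowerSet t ∧ s ⊆ t ∧ t ⊆ u :=
  IsUpperSet.exists_isOpen_isUpperSet_subset (α := αᵒᵈ) hs huc hsu

end OrderClosedTopology

section Hulls

variable {E : Type*} [Preorder E] {S : Set E}

theorem incHull_eq_self_iff : incHull S = S ↔ IsUpperSet S :=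
  upperClosure_eq

theorem decHull_eq_self_iff : decHull S = S ↔ IsLowerSet S :=
  lowerClosure_eq

end Hulls

/-- In a compact closed preordered space, an increasing (resp. decreasing) set
contained in an open set `V` can be enlarged to an open increasing
(resp. open decreasing) set still contained in `V`. -/
theorem monotone_open_interpolation {E : Type*} [TopologicalSpace E] [Preorder E]
    [CompactSpace E]
    (hG : IsClosed {p : E × E | p.1 ≤ p.2})
    (F V : Set E) (hV : IsOpen V) (hFV : F ⊆ V) :
    (incHull F = F → ∃ W : Set E, IsOpen W ∧ incHull W = W ∧ F ⊆ W ∧ W ⊆ V) ∧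
    (decHull F = F → ∃ W : Set E, IsOpen W ∧ decHull W = W ∧ F ⊆ W ∧ W ⊆ V) := by
  have : OrderClosedTopology E := ⟨hG⟩
  have hVc : IsCompact Vᶜ := hV.isClosed_compl.isCompact
  simp only [incHull_eq_self_iff, decHull_eq_self_iff]
  exact ⟨fun hF => hF.exists_isOpen_isUpperSet_subset hVc hFV,
    fun hF => hF.exists_isOpen_isLowerSet_subset hVc hFV⟩
end

section
/- Let E be a normally preordered space, let A ⊆ E be a closed decreasing set, B ⊆ E a closed increasing set, S ⊆ E a compact set, and O ⊆ E an open set such that A ∩ B ∩ S ⊆ O. Then there exist an open decreasing set U ⊇ A and an open increasing set V ⊇ B such that D(U) ∩ I(V) ∩ S ⊆ O, where D(U) is the smallest closed decreasing set containing U and I(V) is the smallest closed increasing set containing V. -/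
/-- `I(S)`: the smallest closed increasing set containing `S`. -/
def closedIncHull {E : Type*} [TopologicalSpace E] [Preorder E] (S : Set E) : Set E :=
  ⋂₀ {C : Set E | S ⊆ C ∧ IsClosed C ∧ incHull C = C}

/-- `D(S)`: the smallest closed decreasing set containing `S`. -/
def closedDecHull {E : Type*} [TopologicalSpace E] [Preorder E] (S : Set E) : Set E :=
  ⋂₀ {C : Set E | S ⊆ C ∧ IsClosed C ∧ decHull C = C}

open Set

section Hulls

variable {E : Type*} [Preorder E] {S : Set E}

theorem decHull_singleton (x : E) : decHull {x} = Iic x := by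
  ext; simp [decHull]

theorem incHull_singleton (x : E) : incHull {x} = Ici x := by
  ext; simp [incHull]

end Hulls

section ClosedHulls

variable {E : Type*} [TopologicalSpace E] [Preorder E] {S T C : Set E}

theorem isClosed_closedDecHull (S : Set E) : IsClosed (closedDecHull S) :=
  isClosed_sInter fun _ hC => hC.2.1

theorem isClosed_closedIncHull (S : Set E) : IsClosed (closedIncHull S) :=
  isClosed_sInter fun _ hC => hC.2.1

theorem closedDecHull_minimal (h : S ⊆ C) (hC : IsClosed C) (hCl : IsLowerSet C) :
    closedDecHull S ⊆ C :=
  sInter_subset_of_mem ⟨h, hC, decHull_eq_self_iff.2 hCl⟩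

theorem closedIncHull_minimal (h : S ⊆ C) (hC : IsClosed C) (hCu : IsUpperSet C) :
    closedIncHull S ⊆ C :=
  sInter_subset_of_mem ⟨h, hC, incHull_eq_self_iff.2 hCu⟩

theorem closedDecHull_mono (h : S ⊆ T) : closedDecHull S ⊆ closedDecHull T :=
  sInter_subset_sInter fun _ hC => ⟨h.trans hC.1, hC.2⟩

theorem closedIncHull_mono (h : S ⊆ T) : closedIncHull S ⊆ closedIncHull T :=
  sInter_subset_sInter fun _ hC => ⟨h.trans hC.1, hC.2⟩

end ClosedHulls

def IsOrderNormal (E : Type*) [TopologicalSpace E] [Preorder E] : Prop :=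
  ∀ A B : Set E, IsClosed A → decHull A = A → IsClosed B → incHull B = B →
    A ∩ B = ∅ → ∃ U V : Set E, IsOpen U ∧ decHull U = U ∧ IsOpen V ∧ incHull V = V ∧
      A ⊆ U ∧ B ⊆ V ∧ U ∩ V = ∅

def openLowerUpperNhds {E : Type*} [TopologicalSpace E] [Preorder E] (A B : Set E) :
    Set (Set E × Set E) :=
  {p | IsOpen p.1 ∧ IsLowerSet p.1 ∧ A ⊆ p.1 ∧ IsOpen p.2 ∧ IsUpperSet p.2 ∧ B ⊆ p.2}

section Separation

variable {E : Type*} [TopologicalSpace E] [Preorder E] {A B : Set E} {x : E}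

theorem IsOrderNormal.exists_open_separation (hNorm : IsOrderNormal E) (hA : IsClosed A)
    (hAl : IsLowerSet A) (hB : IsClosed B) (hBu : IsUpperSet B) (hAB : Disjoint A B) :
    ∃ U V, IsOpen U ∧ IsLowerSet U ∧ IsOpen V ∧ IsUpperSet V ∧ A ⊆ U ∧ B ⊆ V ∧ Disjoint U V := by
  obtain ⟨U, V, hU, hUl, hV, hVu, hAU, hBV, hUV⟩ := hNorm A B hA (decHull_eq_self_iff.2 hAl) hB
    (incHull_eq_self_iff.2 hBu) hAB.inter_eq
  exact ⟨U, V, hU, decHull_eq_self_iff.1 hUl, hV, incHull_eq_self_iff.1 hVu, hAU, hBV,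
    disjoint_iff_inter_eq_empty.2 hUV⟩

theorem IsOrderNormal.exists_isOpen_isLowerSet_notMem_closedDecHull (hNorm : IsOrderNormal E)
    (hx : IsClosed (Ici x)) (hA : IsClosed A) (hAl : IsLowerSet A) (hxA : x ∉ A) :
    ∃ U, IsOpen U ∧ IsLowerSet U ∧ A ⊆ U ∧ x ∉ closedDecHull U := by
  obtain ⟨U, W, hU, hUl, hW, hWu, hAU, hxW, hUW⟩ := hNorm.exists_open_separation hA hAl hx
    (isUpperSet_Ici x) (disjoint_left.2 fun _ hyA hxy => hxA (hAl hxy hyA))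
  have hDW : closedDecHull U ⊆ Wᶜ :=
    closedDecHull_minimal hUW.subset_compl_right hW.isClosed_compl hWu.compl
  exact ⟨U, hU, hUl, hAU, fun hxD => hDW hxD (hxW self_mem_Ici)⟩

theorem IsOrderNormal.exists_isOpen_isUpperSet_notMem_closedIncHull (hNorm : IsOrderNormal E)
    (hx : IsClosed (Iic x)) (hB : IsClosed B) (hBu : IsUpperSet B) (hxB : x ∉ B) :
    ∃ V, IsOpen V ∧ IsUpperSet V ∧ B ⊆ V ∧ x ∉ closedIncHull V := by
  obtain ⟨W, V, hW, hWl, hV, hVu, hxW, hBV, hWV⟩ := hNorm.exists_open_separation hx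
    (isLowerSet_Iic x) hB hBu (disjoint_right.2 fun _ hyB hyx => hxB (hBu hyx hyB))
  have hIW : closedIncHull V ⊆ Wᶜ :=
    closedIncHull_minimal hWV.subset_compl_left hW.isClosed_compl hWl.compl
  exact ⟨V, hV, hVu, hBV, fun hxI => hIW hxI (hxW self_mem_Iic)⟩

end Separation

section Pairs

variable {E : Type*} [TopologicalSpace E] [Preorder E] {A B K : Set E} {x : E}

theorem univ_mem_openLowerUpperNhds : (univ, univ) ∈ openLowerUpperNhds A B :=
  ⟨isOpen_univ, isLowerSet_univ, subset_univ A, isOpen_univ, isUpperSet_univ, subset_univ B⟩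

theorem inter_mem_openLowerUpperNhds {p q : Set E × Set E} (hp : p ∈ openLowerUpperNhds A B)
    (hq : q ∈ openLowerUpperNhds A B) :
    (p.1 ∩ q.1, p.2 ∩ q.2) ∈ openLowerUpperNhds A B :=
  ⟨hp.1.inter hq.1, hp.2.1.inter hq.2.1, subset_inter hp.2.2.1 hq.2.2.1,
    hp.2.2.2.1.inter hq.2.2.2.1, hp.2.2.2.2.1.inter hq.2.2.2.2.1,
    subset_inter hp.2.2.2.2.2 hq.2.2.2.2.2⟩

theorem IsOrderNormal.exists_mem_openLowerUpperNhds_notMem (hNorm : IsOrderNormal E)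
    (hxi : IsClosed (Ici x)) (hxd : IsClosed (Iic x)) (hA : IsClosed A) (hAl : IsLowerSet A)
    (hB : IsClosed B) (hBu : IsUpperSet B) (hxAB : x ∉ A ∩ B) :
    ∃ p ∈ openLowerUpperNhds A B, x ∉ closedDecHull p.1 ∩ closedIncHull p.2 := by
  by_cases hxA : x ∈ A
  · obtain ⟨V, hV, hVu, hBV, hxV⟩ :=
      hNorm.exists_isOpen_isUpperSet_notMem_closedIncHull hxd hB hBu fun hxB => hxAB ⟨hxA, hxB⟩
    exact ⟨(univ, V), ⟨isOpen_univ, isLowerSet_univ, subset_univ A, hV, hVu, hBV⟩,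
      fun hx => hxV hx.2⟩
  · obtain ⟨U, hU, hUl, hAU, hxU⟩ :=
      hNorm.exists_isOpen_isLowerSet_notMem_closedDecHull hxi hA hAl hxA
    exact ⟨(U, univ), ⟨hU, hUl, hAU, isOpen_univ, isUpperSet_univ, subset_univ B⟩,
      fun hx => hxU hx.1⟩

theorem IsCompact.exists_mem_openLowerUpperNhds_disjoint (hK : IsCompact K)
    (h : ∀ x ∈ K, ∃ p ∈ openLowerUpperNhds A B, x ∉ closedDecHull p.1 ∩ closedIncHull p.2) :
    ∃ p ∈ openLowerUpperNhds A B, Disjoint (closedDecHull p.1 ∩ closedIncHull p.2) K := by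
  let f (p : openLowerUpperNhds A B) : Set E := (closedDecHull p.1.1 ∩ closedIncHull p.1.2)ᶜ
  have hf_antitone {p q : openLowerUpperNhds A B} (h₁ : q.1.1 ⊆ p.1.1) (h₂ : q.1.2 ⊆ p.1.2) :
      f p ⊆ f q :=
    compl_subset_compl.2 (inter_subset_inter (closedDecHull_mono h₁) (closedIncHull_mono h₂))
  have : Nonempty (openLowerUpperNhds A B) := ⟨⟨_, univ_mem_openLowerUpperNhds⟩⟩
  obtain ⟨⟨p, hp⟩, hKp⟩ := hK.elim_directed_cover f
    (fun p => ((isClosed_closedDecHull _).inter (isClosed_closedIncHull _)).isOpen_compl)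
    (fun x hx => let ⟨p, hp, hxp⟩ := h x hx; mem_iUnion.2 ⟨⟨p, hp⟩, hxp⟩)
    fun p q => ⟨⟨_, inter_mem_openLowerUpperNhds p.2 q.2⟩,
      hf_antitone inter_subset_left inter_subset_left,
      hf_antitone inter_subset_right inter_subset_right⟩
  exact ⟨p, hp, subset_compl_iff_disjoint_left.1 hKp⟩

end Pairs

/-- In a normally preordered space, given a closed decreasing set `A`, a closed
increasing set `B`, a compact set `S` and an open set `O` with `A ∩ B ∩ S ⊆ O`,
there are an open decreasing `U ⊇ A` and an open increasing `V ⊇ B` with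
`D(U) ∩ I(V) ∩ S ⊆ O`. -/
theorem normallyPreordered_convex_separation {E : Type*} [TopologicalSpace E] [Preorder E]
    (hT1 : ∀ x : E, IsClosed (incHull {x}) ∧ IsClosed (decHull {x}))
    (hNorm : ∀ A B : Set E, IsClosed A → decHull A = A → IsClosed B → incHull B = B →
      A ∩ B = ∅ → ∃ U V : Set E, IsOpen U ∧ decHull U = U ∧ IsOpen V ∧ incHull V = V ∧
        A ⊆ U ∧ B ⊆ V ∧ U ∩ V = ∅)
    (A B S O : Set E)
    (hA : IsClosed A) (hAd : decHull A = A)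
    (hB : IsClosed B) (hBi : incHull B = B)
    (hS : IsCompact S) (hO : IsOpen O)
    (hABS : A ∩ B ∩ S ⊆ O) :
    ∃ U V : Set E, IsOpen U ∧ decHull U = U ∧ A ⊆ U ∧
      IsOpen V ∧ incHull V = V ∧ B ⊆ V ∧
      closedDecHull U ∩ closedIncHull V ∩ S ⊆ O := by
  have hAl : IsLowerSet A := decHull_eq_self_iff.1 hAd
  have hBu : IsUpperSet B := incHull_eq_self_iff.1 hBi
  have hSep (x : E) (hx : x ∈ S \ O) :
      ∃ p ∈ openLowerUpperNhds A B, x ∉ closedDecHull p.1 ∩ closedIncHull p.2 :=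
    IsOrderNormal.exists_mem_openLowerUpperNhds_notMem hNorm
      (incHull_singleton x ▸ (hT1 x).1) (decHull_singleton x ▸ (hT1 x).2) hA hAl hB hBu
      fun hxAB => hx.2 (hABS ⟨hxAB, hx.1⟩)
  obtain ⟨⟨U, V⟩, ⟨hU, hUl, hAU, hV, hVu, hBV⟩, hUV⟩ :=
    (hS.diff hO).exists_mem_openLowerUpperNhds_disjoint hSep
  refine ⟨U, V, hU, decHull_eq_self_iff.2 hUl, hAU, hV, incHull_eq_self_iff.2 hVu, hBV, ?_⟩
  rintro y ⟨hyUV, hyS⟩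
  by_contra hyO
  exact hUV.notMem_of_mem_left hyUV ⟨hyS, hyO⟩
end

section
/- Let E be a closed preordered space and x ∈ E, and set [x] = d(x) ∩ i(x). If [x] admits a compact neighborhood (a compact set whose interior contains [x]), then for every open set O' with [x] ⊆ O' there exists a compact neighborhood of [x] contained in O'. In particular, if ≤ is antisymmetric at x (so [x] = {x}) and x has a compact neighborhood, then every open neighborhood of x contains a compact neighborhood of x. -/
/-!
The class `[x]` is the interval `Icc x x`, which is closed because the graph of `≤` is, hence
compact inside its compact neighbourhood `K`. The closed graph also separates `[x]` from every
point outside it, so `[x]` and the compact set `K \ (interior K ∩ O')` have disjoint open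
neighbourhoods `U` and `V`; then `K \ V` is a compact neighbourhood of `[x]` inside `O'`.
-/

open Set Filter Topology

theorem exists_isCompact_subset_of_forall_disjoint_nhds {X : Type*} [TopologicalSpace X]
    {S K O : Set X} (hS : IsCompact S) (hK : IsCompact K) (hSK : S ⊆ interior K)
    (hsep : ∀ y ∈ S, ∀ z ∉ S, Disjoint (𝓝 y) (𝓝 z)) (hO : IsOpen O) (hSO : S ⊆ O) :
    ∃ K', IsCompact K' ∧ S ⊆ interior K' ∧ K' ⊆ O := by
  set C := K \ (interior K ∩ O)
  have hC : IsCompact C := hK.diff (isOpen_interior.inter hO)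
  have hSC : SeparatedNhds S C := by
    rw [separatedNhds_iff_disjoint, hS.disjoint_nhdsSet_left]
    refine fun y hy => hC.disjoint_nhdsSet_right.2 fun z hz => hsep y hy z fun hzS => ?_
    exact hz.2 ⟨hSK hzS, hSO hzS⟩
  obtain ⟨U, V, hU, hV, hSU, hCV, hUV⟩ := hSC
  refine ⟨K \ V, hK.diff hV, ?_, ?_⟩
  · have hUK : interior K ∩ U ⊆ K \ V := fun p hp =>
      ⟨interior_subset hp.1, disjoint_left.1 hUV hp.2⟩
    exact (subset_inter hSK hSU).trans (interior_maximal hUK (isOpen_interior.inter hU))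
  · intro p ⟨hpK, hpV⟩
    by_contra hpO
    exact hpV (hCV ⟨hpK, fun hp => hpO hp.2⟩)

section ClosedPreorder

variable {E : Type*} [TopologicalSpace E] [Preorder E] [OrderClosedTopology E]

theorem disjoint_nhds_nhds_of_not_le {a b : E} (h : ¬a ≤ b) : Disjoint (𝓝 a) (𝓝 b) := by
  have : {p : E × E | p.1 ≤ p.2}ᶜ ∈ 𝓝 a ×ˢ 𝓝 b := by
    rw [← nhds_prod_eq]
    exact OrderClosedTopology.isClosed_le'.isOpen_compl.mem_nhds h
  obtain ⟨U, hU, V, hV, hUV⟩ := mem_prod_iff.1 this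
  exact disjoint_of_disjoint_of_mem
    (disjoint_left.2 fun p hpU hpV => hUV (mk_mem_prod hpU hpV) (le_refl p)) hU hV

theorem disjoint_nhds_of_mem_Icc_self_of_notMem {x y z : E} (hy : y ∈ Icc x x)
    (hz : z ∉ Icc x x) : Disjoint (𝓝 y) (𝓝 z) := by
  by_cases hxz : x ≤ z
  · have hzy : ¬z ≤ y := fun h => hz ⟨hxz, h.trans hy.2⟩
    exact (disjoint_nhds_nhds_of_not_le hzy).symm
  · exact disjoint_nhds_nhds_of_not_le fun h => hxz (hy.1.trans h)

end ClosedPreorder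

theorem decHull_inter_incHull_singleton {E : Type*} [Preorder E] (x : E) :
    decHull {x} ∩ incHull {x} = Icc x x := by
  ext y
  simp [decHull, incHull, and_comm]

theorem Icc_self_eq_singleton_of_antisymm {E : Type*} [Preorder E] {x : E}
    (h : ∀ y : E, x ≤ y → y ≤ x → y = x) : Icc x x = {x} :=
  eq_singleton_iff_unique_mem.2 ⟨left_mem_Icc.2 le_rfl, fun y hy => h y hy.1 hy.2⟩

/-- In a closed preordered space, if `[x] = d(x) ∩ i(x)` admits a compact
neighborhood, then every open set containing `[x]` contains a compact
neighborhood of `[x]`. In particular, under antisymmetry at `x`, local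
compactness at `x` implies strong local compactness at `x`. -/
theorem compact_nbhd_basis_of_classNbhd {E : Type*} [TopologicalSpace E] [Preorder E]
    (hG : IsClosed {p : E × E | p.1 ≤ p.2}) (x : E)
    (hnbhd : ∃ K : Set E, IsCompact K ∧ decHull {x} ∩ incHull {x} ⊆ interior K) :
    (∀ O' : Set E, IsOpen O' → decHull {x} ∩ incHull {x} ⊆ O' →
      ∃ K' : Set E, IsCompact K' ∧ decHull {x} ∩ incHull {x} ⊆ interior K' ∧ K' ⊆ O') ∧
    ((∀ y : E, x ≤ y → y ≤ x → y = x) →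
      ∀ O' : Set E, IsOpen O' → x ∈ O' →
        ∃ K' : Set E, IsCompact K' ∧ x ∈ interior K' ∧ K' ⊆ O') := by
  have : OrderClosedTopology E := ⟨hG⟩
  rw [decHull_inter_incHull_singleton] at hnbhd ⊢
  obtain ⟨K, hK, hxK⟩ := hnbhd
  have hclass : IsCompact (Icc x x) :=
    hK.of_isClosed_subset isClosed_Icc (hxK.trans interior_subset)
  have hclassNbhd : ∀ O' : Set E, IsOpen O' → Icc x x ⊆ O' →
      ∃ K' : Set E, IsCompact K' ∧ Icc x x ⊆ interior K' ∧ K' ⊆ O' := fun O' hO hxO =>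
    exists_isCompact_subset_of_forall_disjoint_nhds hclass hK hxK
      (fun _ hy _ hz => disjoint_nhds_of_mem_Icc_self_of_notMem hy hz) hO hxO
  refine ⟨hclassNbhd, fun hanti => ?_⟩
  simpa only [Icc_self_eq_singleton_of_antisymm hanti, singleton_subset_iff] using hclassNbhd
end

section
/- Let E be a closed preordered space and x ∈ E. If x has a compact neighborhood and E is locally convex at x, then the c-compact neighborhoods of x form a base of the neighborhood filter at x, and the open convex neighborhoods of x form a base of the neighborhood filter at x (i.e., E is weakly convex at x). -/
/-!
Since the graph of `≤` is closed, the tube lemma shows that for compact `M` the hulls `i(M)` and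
`d(M)` are closed, and that a compact set disjoint from `d(M) ∩ i(M)` has an open neighbourhood
disjoint from `d(V) ∩ i(V)` for some open `V ⊇ M`. Local convexity puts `d(x) ∩ i(x)` inside every
neighbourhood of `x`, so it is compact and convex. Given a convex neighbourhood `C` inside the
compact neighbourhood `K`, separating `d(x) ∩ i(x)` from `K \ int C` gives a compact `F ⊆ C` with
`x ∈ int F`, and its hull `d(F) ∩ i(F) ⊆ C` is a c-compact neighbourhood of `x`.

For weak convexity (Nachbin's argument) fix such a c-compact convex neighbourhood `N` and iterate:
starting from `M₀ = d(x) ∩ i(x)`, each compact convex `Mₙ ⊆ int N` lies in `int Fₙ` for a compact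
`Fₙ` with `Mₙ₊₁ := d(Fₙ) ∩ i(Fₙ) ⊆ int N`. The increasing union of the `int Fₙ` is open and convex.
-/

open Set Filter Topology

/-- A subset `C` is (order) convex if `C = d(C) ∩ i(C)`. -/
def IsOrdConvex {E : Type*} [Preorder E] (C : Set E) : Prop :=
  decHull C ∩ incHull C = C

/-- A `c`-set: an intersection of a closed decreasing set and a closed
increasing set. -/
def IsCSet {E : Type*} [TopologicalSpace E] [Preorder E] (C : Set E) : Prop :=
  ∃ A B : Set E, IsClosed A ∧ decHull A = A ∧ IsClosed B ∧ incHull B = B ∧ C = A ∩ B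

def ordHull {E : Type*} [Preorder E] (S : Set E) : Set E := decHull S ∩ incHull S

section Order

variable {E : Type*} [Preorder E] {S T C : Set E}

theorem incHull_mono (h : S ⊆ T) : incHull S ⊆ incHull T :=
  fun _ ⟨a, ha, hle⟩ => ⟨a, h ha, hle⟩

theorem decHull_mono (h : S ⊆ T) : decHull S ⊆ decHull T :=
  fun _ ⟨a, ha, hle⟩ => ⟨a, h ha, hle⟩

theorem ordHull_mono (h : S ⊆ T) : ordHull S ⊆ ordHull T :=
  inter_subset_inter (decHull_mono h) (incHull_mono h)

theorem incHull_incHull (S : Set E) : incHull (incHull S) = incHull S :=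
  Subset.antisymm (fun _ ⟨_, ⟨b, hb, hba⟩, hay⟩ => ⟨b, hb, hba.trans hay⟩)
    fun y hy => ⟨y, hy, le_rfl⟩

theorem decHull_decHull (S : Set E) : decHull (decHull S) = decHull S :=
  Subset.antisymm (fun _ ⟨_, ⟨b, hb, hab⟩, hya⟩ => ⟨b, hb, hya.trans hab⟩)
    fun y hy => ⟨y, hy, le_rfl⟩

theorem subset_ordHull (S : Set E) : S ⊆ ordHull S :=
  fun y hy => ⟨⟨y, hy, le_rfl⟩, ⟨y, hy, le_rfl⟩⟩

theorem mem_ordHull_singleton (x : E) : x ∈ ordHull {x} :=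
  subset_ordHull _ rfl

theorem isOrdConvex_ordHull (S : Set E) : IsOrdConvex (ordHull S) :=
  Subset.antisymm
    (inter_subset_inter
      ((decHull_mono inter_subset_left).trans (decHull_decHull S).subset)
      ((incHull_mono inter_subset_right).trans (incHull_incHull S).subset))
    (subset_ordHull _)

theorem ordHull_subset_of_isOrdConvex (hC : IsOrdConvex C) (h : S ⊆ C) : ordHull S ⊆ C :=
  (ordHull_mono h).trans hC.subset

theorem isOrdConvex_iUnion {V : ℕ → Set E} (h : ∀ n, ordHull (V n) ⊆ V (n + 1)) :
    IsOrdConvex (⋃ n, V n) := by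
  have hmono : Monotone V :=
    monotone_nat_of_le_succ fun n => (subset_ordHull _).trans (h n)
  refine Subset.antisymm ?_ (subset_ordHull _)
  rintro y ⟨⟨a, ha, hya⟩, ⟨b, hb, hby⟩⟩
  obtain ⟨i, hi⟩ := mem_iUnion.1 ha
  obtain ⟨j, hj⟩ := mem_iUnion.1 hb
  exact mem_iUnion.2 ⟨max i j + 1, h _
    ⟨⟨a, hmono (le_max_left i j) hi, hya⟩, ⟨b, hmono (le_max_right i j) hj, hby⟩⟩⟩

end Order

section Topology

variable {E : Type*} [TopologicalSpace E] [Preorder E] {M T U K F : Set E}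

theorem exists_isOpen_disjoint_incHull (hG : IsClosed {p : E × E | p.1 ≤ p.2})
    (hM : IsCompact M) (hT : IsCompact T) (h : Disjoint T (incHull M)) :
    ∃ W V, IsOpen W ∧ IsOpen V ∧ T ⊆ W ∧ M ⊆ V ∧ Disjoint W (incHull V) := by
  obtain ⟨V, W, hV, hW, hMV, hTW, hVW⟩ := generalized_tube_lemma hM hT hG.isOpen_compl
    fun p ⟨hp₁, hp₂⟩ hle => disjoint_left.1 h hp₂ ⟨p.1, hp₁, hle⟩
  refine ⟨W, V, hW, hV, hTW, hMV, disjoint_left.2 ?_⟩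
  rintro y hy ⟨v, hv, hvy⟩
  exact hVW (mk_mem_prod hv hy) hvy

theorem exists_isOpen_disjoint_decHull (hG : IsClosed {p : E × E | p.1 ≤ p.2})
    (hM : IsCompact M) (hT : IsCompact T) (h : Disjoint T (decHull M)) :
    ∃ W V, IsOpen W ∧ IsOpen V ∧ T ⊆ W ∧ M ⊆ V ∧ Disjoint W (decHull V) := by
  obtain ⟨W, V, hW, hV, hTW, hMV, hWV⟩ := generalized_tube_lemma hT hM hG.isOpen_compl
    fun p ⟨hp₁, hp₂⟩ hle => disjoint_left.1 h hp₁ ⟨p.2, hp₂, hle⟩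
  refine ⟨W, V, hW, hV, hTW, hMV, disjoint_left.2 ?_⟩
  rintro y hy ⟨v, hv, hyv⟩
  exact hWV (mk_mem_prod hy hv) hyv

theorem isClosed_incHull (hG : IsClosed {p : E × E | p.1 ≤ p.2}) (hF : IsCompact F) :
    IsClosed (incHull F) := by
  refine isOpen_compl_iff.1 <| isOpen_iff_forall_mem_open.2 fun y hy => ?_
  obtain ⟨W, V, hW, -, hyW, hFV, hWV⟩ :=
    exists_isOpen_disjoint_incHull hG hF isCompact_singleton (disjoint_singleton_left.2 hy)
  exact ⟨W, (hWV.mono_right (incHull_mono hFV)).subset_compl_right, hW, hyW rfl⟩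

theorem isClosed_decHull (hG : IsClosed {p : E × E | p.1 ≤ p.2}) (hF : IsCompact F) :
    IsClosed (decHull F) := by
  refine isOpen_compl_iff.1 <| isOpen_iff_forall_mem_open.2 fun y hy => ?_
  obtain ⟨W, V, hW, -, hyW, hFV, hWV⟩ :=
    exists_isOpen_disjoint_decHull hG hF isCompact_singleton (disjoint_singleton_left.2 hy)
  exact ⟨W, (hWV.mono_right (decHull_mono hFV)).subset_compl_right, hW, hyW rfl⟩

theorem isClosed_ordHull (hG : IsClosed {p : E × E | p.1 ≤ p.2}) (hF : IsCompact F) :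
    IsClosed (ordHull F) :=
  (isClosed_decHull hG hF).inter (isClosed_incHull hG hF)

theorem isCSet_ordHull (hG : IsClosed {p : E × E | p.1 ≤ p.2}) (hF : IsCompact F) :
    IsCSet (ordHull F) :=
  ⟨decHull F, incHull F, isClosed_decHull hG hF, decHull_decHull F,
    isClosed_incHull hG hF, incHull_incHull F, rfl⟩

theorem IsCompact.ordHull_of_subset (hG : IsClosed {p : E × E | p.1 ≤ p.2})
    (hF : IsCompact F) (hK : IsCompact K) (h : ordHull F ⊆ K) : IsCompact (ordHull F) :=
  hK.of_isClosed_subset (isClosed_ordHull hG hF) h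

/-- The points of `T ∩ i(M)` lie outside the closed set `d(M)`, and the rest of `T` outside a
neighbourhood of them is a compact set disjoint from `i(M)`. -/
theorem exists_isOpen_disjoint_ordHull (hG : IsClosed {p : E × E | p.1 ≤ p.2})
    (hM : IsCompact M) (hT : IsCompact T) (h : Disjoint T (ordHull M)) :
    ∃ W V, IsOpen W ∧ IsOpen V ∧ T ⊆ W ∧ M ⊆ V ∧ Disjoint W (ordHull V) := by
  obtain ⟨W₁, V₁, hW₁, hV₁, hTW₁, hMV₁, hWV₁⟩ :=
    exists_isOpen_disjoint_decHull hG hM (hT.inter_right (isClosed_incHull hG hM)) <|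
      disjoint_left.2 fun y ⟨hyT, hyi⟩ hyd => disjoint_left.1 h hyT ⟨hyd, hyi⟩
  obtain ⟨W₂, V₂, hW₂, hV₂, hTW₂, hMV₂, hWV₂⟩ :=
    exists_isOpen_disjoint_incHull hG hM (hT.diff hW₁) <|
      disjoint_left.2 fun y ⟨hyT, hyW₁⟩ hyi => hyW₁ (hTW₁ ⟨hyT, hyi⟩)
  refine ⟨W₁ ∪ W₂, V₁ ∩ V₂, hW₁.union hW₂, hV₁.inter hV₂,
    fun y hy => or_iff_not_imp_left.2 fun hyW₁ => hTW₂ ⟨hy, hyW₁⟩, subset_inter hMV₁ hMV₂, ?_⟩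
  refine disjoint_union_left.2 ⟨hWV₁.mono_right ?_, hWV₂.mono_right ?_⟩
  · exact inter_subset_left.trans (decHull_mono inter_subset_left)
  · exact inter_subset_right.trans (incHull_mono inter_subset_right)

theorem exists_isCompact_between_of_isOrdConvex (hG : IsClosed {p : E × E | p.1 ≤ p.2})
    (hK : IsCompact K) (hM : IsCompact M) (hMc : IsOrdConvex M) (hU : IsOpen U)
    (hMU : M ⊆ U) (hUK : U ⊆ K) :
    ∃ F, IsCompact F ∧ M ⊆ interior F ∧ F ⊆ U := by
  obtain ⟨W, V, hW, hV, hTW, hMV, hWV⟩ :=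
    exists_isOpen_disjoint_ordHull hG hM (hK.diff hU)
      (disjoint_sdiff_left.mono_right (hMc.subset.trans hMU))
  have hWV' : Disjoint W (closure V) :=
    (hWV.mono_right (subset_ordHull V)).closure_right hW
  refine ⟨K ∩ closure (V ∩ U), hK.inter_right isClosed_closure, ?_, ?_⟩
  · refine (subset_inter hMV hMU).trans <| interior_maximal ?_ (hV.inter hU)
    exact subset_inter (inter_subset_right.trans hUK) subset_closure
  · rintro y ⟨hyK, hy⟩
    by_contra hyU
    exact disjoint_left.1 hWV' (hTW ⟨hyK, hyU⟩) (closure_mono inter_subset_left hy)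

theorem exists_isCompact_ordHull_subset_interior (hG : IsClosed {p : E × E | p.1 ≤ p.2})
    (hK : IsCompact K) (hKc : IsOrdConvex K) (hM : IsCompact M) (hMc : IsOrdConvex M)
    (hMK : M ⊆ interior K) :
    ∃ F, IsCompact F ∧ M ⊆ interior F ∧ ordHull F ⊆ interior K := by
  obtain ⟨W, V, hW, hV, hTW, hMV, hWV⟩ := exists_isOpen_disjoint_ordHull hG hM
    (hK.diff isOpen_interior) (disjoint_sdiff_left.mono_right (hMc.subset.trans hMK))
  obtain ⟨F, hF, hMF, hFU⟩ := exists_isCompact_between_of_isOrdConvex hG hK hM hMc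
    (hV.inter isOpen_interior) (subset_inter hMV hMK) (inter_subset_right.trans interior_subset)
  refine ⟨F, hF, hMF, fun y hy => ?_⟩
  have hyK : y ∈ K :=
    ordHull_subset_of_isOrdConvex hKc (hFU.trans (inter_subset_right.trans interior_subset)) hy
  by_contra hyK'
  exact disjoint_left.1 hWV (hTW ⟨hyK, hyK'⟩) (ordHull_mono (hFU.trans inter_subset_left) hy)

theorem exists_isOpen_isOrdConvex_of_forall_exists_ordHull {P : Set E → Prop} {M₀ : Set E}
    (h₀ : P M₀) (hstep : ∀ M, P M → ∃ F, M ⊆ interior F ∧ P (ordHull F)) :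
    ∃ W, IsOpen W ∧ IsOrdConvex W ∧ M₀ ⊆ W ∧ W ⊆ ⋃₀ {M | P M} := by
  choose! F hMF hPF using hstep
  let Ms : ℕ → Set E := fun n => Nat.rec M₀ (fun _ M => ordHull (F M)) n
  have hP : ∀ n, P (Ms n) := by
    intro n
    induction n with
    | zero => exact h₀
    | succ n ih => exact hPF _ ih
  refine ⟨⋃ n, interior (F (Ms n)), isOpen_iUnion fun _ => isOpen_interior,
    isOrdConvex_iUnion fun n => (ordHull_mono interior_subset).trans (hMF _ (hP (n + 1))),
    (hMF _ h₀).trans (subset_iUnion (fun n => interior (F (Ms n))) 0), ?_⟩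
  exact iUnion_subset fun n =>
    interior_subset.trans ((subset_ordHull _).trans (subset_sUnion_of_mem (hP (n + 1))))

theorem ordHull_singleton_subset_of_mem_nhds {x : E}
    (hlc : ∀ O ∈ 𝓝 x, ∃ C ∈ 𝓝 x, IsOrdConvex C ∧ C ⊆ O) {S : Set E} (hS : S ∈ 𝓝 x) :
    ordHull {x} ⊆ S := by
  obtain ⟨C, hCx, hCc, hCS⟩ := hlc S hS
  exact (ordHull_subset_of_isOrdConvex hCc (singleton_subset_iff.2 (mem_of_mem_nhds hCx))).trans
    hCS

theorem exists_isCompact_isCSet_isOrdConvex_mem_nhds_subset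
    (hG : IsClosed {p : E × E | p.1 ≤ p.2}) {x : E} (hK : IsCompact K) (hKx : K ∈ 𝓝 x)
    (hlc : ∀ O ∈ 𝓝 x, ∃ C ∈ 𝓝 x, IsOrdConvex C ∧ C ⊆ O) {O : Set E} (hO : O ∈ 𝓝 x) :
    ∃ N ∈ 𝓝 x, IsCompact N ∧ IsCSet N ∧ IsOrdConvex N ∧ N ⊆ O := by
  obtain ⟨C, hCx, hCc, hCOK⟩ := hlc (O ∩ K) (inter_mem hO hKx)
  have hM₀ : ordHull {x} ⊆ interior C :=
    ordHull_singleton_subset_of_mem_nhds hlc (interior_mem_nhds.2 hCx)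
  obtain ⟨F, hF, hM₀F, hFC⟩ := exists_isCompact_between_of_isOrdConvex hG hK
    (isCompact_singleton.ordHull_of_subset hG hK (ordHull_singleton_subset_of_mem_nhds hlc hKx))
    (isOrdConvex_ordHull _) isOpen_interior hM₀
    (interior_subset.trans (hCOK.trans inter_subset_right))
  have hNC : ordHull F ⊆ C := ordHull_subset_of_isOrdConvex hCc (hFC.trans interior_subset)
  have hFx : F ∈ 𝓝 x := mem_interior_iff_mem_nhds.1 (hM₀F (mem_ordHull_singleton x))
  exact ⟨ordHull F, mem_of_superset hFx (subset_ordHull F),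
    hF.ordHull_of_subset hG hK (hNC.trans (hCOK.trans inter_subset_right)),
    isCSet_ordHull hG hF, isOrdConvex_ordHull F, hNC.trans (hCOK.trans inter_subset_left)⟩

theorem exists_isOpen_isOrdConvex_mem_nhds_subset (hG : IsClosed {p : E × E | p.1 ≤ p.2})
    {x : E} (hlc : ∀ O ∈ 𝓝 x, ∃ C ∈ 𝓝 x, IsOrdConvex C ∧ C ⊆ O) {N : Set E}
    (hN : IsCompact N) (hNc : IsOrdConvex N) (hNx : N ∈ 𝓝 x) :
    ∃ W ∈ 𝓝 x, IsOpen W ∧ IsOrdConvex W ∧ W ⊆ N := by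
  have hM₀ : ordHull {x} ⊆ interior N :=
    ordHull_singleton_subset_of_mem_nhds hlc (interior_mem_nhds.2 hNx)
  obtain ⟨W, hW, hWc, hM₀W, hWN⟩ :=
    exists_isOpen_isOrdConvex_of_forall_exists_ordHull
      (P := fun M => IsCompact M ∧ IsOrdConvex M ∧ M ⊆ interior N)
      ⟨isCompact_singleton.ordHull_of_subset hG hN (hM₀.trans interior_subset),
        isOrdConvex_ordHull _, hM₀⟩
      fun M ⟨hM, hMc, hMN⟩ => by
        obtain ⟨F, hF, hMF, hFN⟩ :=
          exists_isCompact_ordHull_subset_interior hG hN hNc hM hMc hMN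
        exact ⟨F, hMF, hF.ordHull_of_subset hG hN (hFN.trans interior_subset),
          isOrdConvex_ordHull F, hFN⟩
  exact ⟨W, hW.mem_nhds (hM₀W (mem_ordHull_singleton x)), hW, hWc,
    hWN.trans (sUnion_subset fun M hM => hM.2.2.trans interior_subset)⟩

end Topology

/-- In a closed preordered space, if `x` has a compact neighborhood and the
space is locally convex at `x`, then the c-compact neighborhoods of `x` form a
base of the neighborhood filter at `x`, and so do the open convex
neighborhoods of `x` (weak convexity at `x`). -/
theorem cCompact_and_openConvex_nbhd_basis {E : Type*} [TopologicalSpace E] [Preorder E]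
    (hG : IsClosed {p : E × E | p.1 ≤ p.2}) (x : E)
    (hk : ∃ K : Set E, IsCompact K ∧ K ∈ 𝓝 x)
    (hlc : ∀ O ∈ 𝓝 x, ∃ C ∈ 𝓝 x, IsOrdConvex C ∧ C ⊆ O) :
    (∀ O ∈ 𝓝 x, ∃ N ∈ 𝓝 x, IsCompact N ∧ IsCSet N ∧ N ⊆ O) ∧
    (∀ O ∈ 𝓝 x, ∃ N ∈ 𝓝 x, IsOpen N ∧ IsOrdConvex N ∧ N ⊆ O) := by
  obtain ⟨K, hK, hKx⟩ := hk
  refine ⟨fun O hO => ?_, fun O hO => ?_⟩ <;>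
    obtain ⟨N, hNx, hN, hNcs, hNc, hNO⟩ :=
      exists_isCompact_isCSet_isOrdConvex_mem_nhds_subset hG hK hKx hlc hO
  · exact ⟨N, hNx, hN, hNcs, hNO⟩
  · obtain ⟨W, hWx, hW, hWc, hWN⟩ :=
      exists_isOpen_isOrdConvex_mem_nhds_subset hG hlc hN hNc hNx
    exact ⟨W, hWx, hW, hWc, hWN.trans hNO⟩
end

section
/- Let E be a closed preordered space and x ∈ E. Suppose the topology does not distinguish the points of [x] = d(x) ∩ i(x) (i.e., any open set containing one point of [x] contains all of [x]) and that x admits a c-compact neighborhood. Then the c-compact neighborhoods of x form a base of the neighborhood filter at x, and E is weakly convex at x. -/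
/-!
Closedness of the graph of `≤` makes the hulls `d(C)`, `i(C)` of a compact set `C` closed and puts
every cluster point of `𝓝 x` in `[x]`. For a c-compact neighbourhood `K` of `x`, the convex hulls
of the sets `closure U ∩ K` (`U ∈ 𝓝 x`) are c-compact neighbourhoods of `x`; since hulls commute
with directed intersections of compact sets, they shrink into `[x]`, so by compactness one of them
lies in any neighbourhood of `x`, which is a neighbourhood of every point of `[x]`.

For weak convexity, take a c-compact neighbourhood `N`. Its compact part `N \ interior N` misses
`[x]`, so separating its points above `x` from those below `x` covers it by compact sets `C₁`, `C₂`
with `x ∉ d(C₁)` and `x ∉ i(C₂)`. Then `N \ (d(C₁) ∪ i(C₂))` is a convex neighbourhood of `x`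
missing `N \ interior N`, hence open.
-/

open Topology

open Set Filter

section Hulls

variable {E : Type*} [Preorder E]

theorem incHull_eq_upperClosure (S : Set E) : incHull S = upperClosure S := rfl

theorem decHull_eq_lowerClosure (S : Set E) : decHull S = lowerClosure S := rfl

theorem decHull_singleton_inter_incHull_singleton (x : E) :
    decHull {x} ∩ incHull {x} = Icc x x := by
  ext y
  simp [decHull, incHull, and_comm]

theorem isOrdConvex_iff_ordConnected {C : Set E} : IsOrdConvex C ↔ C.OrdConnected := by
  rw [ordConnected_iff_upperClosure_inter_lowerClosure, inter_comm]
  rfl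

theorem isCSet_iff [TopologicalSpace E] {C : Set E} :
    IsCSet C ↔ ∃ A B : Set E, IsClosed A ∧ IsLowerSet A ∧ IsClosed B ∧ IsUpperSet B ∧
      C = A ∩ B := by
  simp only [IsCSet, decHull_eq_lowerClosure, incHull_eq_upperClosure, lowerClosure_eq,
    upperClosure_eq]

theorem IsCSet.isClosed [TopologicalSpace E] {C : Set E} (hC : IsCSet C) : IsClosed C := by
  obtain ⟨A, B, hA, -, hB, -, rfl⟩ := hC
  exact hA.inter hB

theorem IsCSet.ordConnected [TopologicalSpace E] {C : Set E} (hC : IsCSet C) :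
    C.OrdConnected := by
  obtain ⟨A, B, -, hA, -, hB, rfl⟩ := isCSet_iff.1 hC
  exact hA.ordConnected.inter hB.ordConnected

theorem Set.OrdConnected.lowerClosure_inter_upperClosure_subset {K S : Set E}
    (hK : K.OrdConnected) (hS : S ⊆ K) : (lowerClosure S ∩ upperClosure S : Set E) ⊆ K := by
  rintro y ⟨⟨a, ha, hya⟩, b, hb, hby⟩
  exact hK.out (hS hb) (hS ha) ⟨hby, hya⟩

end Hulls

section OrderClosed

variable {E : Type*} [TopologicalSpace E] [Preorder E]

theorem ClusterPt.mem_Icc_of_nhds [OrderClosedTopology E] {a b : E} (h : ClusterPt a (𝓝 b)) :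
    a ∈ Icc b b := by
  have : (𝓝 a ⊓ 𝓝 b).NeBot := h
  have ha : Tendsto id (𝓝 a ⊓ 𝓝 b) (𝓝 a) := tendsto_inf_left tendsto_id
  have hb : Tendsto id (𝓝 a ⊓ 𝓝 b) (𝓝 b) := tendsto_inf_right tendsto_id
  exact ⟨le_of_tendsto_of_tendsto hb ha (.of_forall fun _ => le_rfl),
    le_of_tendsto_of_tendsto ha hb (.of_forall fun _ => le_rfl)⟩

theorem IsCompact.isClosed_upperClosure [OrderClosedTopology E] {C : Set E} (hC : IsCompact C) :
    IsClosed (upperClosure C : Set E) := by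
  have : CompactSpace C := isCompact_iff_compactSpace.1 hC
  have hgraph : IsClosed {p : C × E | (p.1 : E) ≤ p.2} :=
    isClosed_le (continuous_subtype_val.comp continuous_fst) continuous_snd
  convert isClosedMap_snd_of_compactSpace _ hgraph using 1
  ext y
  simp [mem_upperClosure]

theorem IsCompact.isClosed_lowerClosure_s10 [OrderClosedTopology E] {C : Set E} (hC : IsCompact C) :
    IsClosed (lowerClosure C : Set E) :=
  IsCompact.isClosed_upperClosure (E := Eᵒᵈ) hC

theorem IsCompact.isCSet_lowerClosure_inter_upperClosure [OrderClosedTopology E] {C : Set E}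
    (hC : IsCompact C) : IsCSet (lowerClosure C ∩ upperClosure C : Set E) :=
  isCSet_iff.2 ⟨_, _, hC.isClosed_lowerClosure_s10, (lowerClosure C).lower,
    hC.isClosed_upperClosure, (upperClosure C).upper, rfl⟩

theorem IsCompact.exists_isOpen_disjoint_of_forall_not_le [OrderClosedTopology E]
    {s t : Set E} (hs : IsCompact s) (ht : IsCompact t) (h : ∀ a ∈ s, ∀ b ∈ t, ¬a ≤ b) :
    ∃ u v : Set E, IsOpen u ∧ IsOpen v ∧ s ⊆ u ∧ t ⊆ v ∧ Disjoint u v := by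
  obtain ⟨u, v, hu, hv, hsu, htv, huv⟩ :=
    generalized_tube_lemma hs ht isClosed_le_prod.isOpen_compl fun p hp => h _ hp.1 _ hp.2
  exact ⟨u, v, hu, hv, hsu, htv, disjoint_left.2 fun a hau hav => huv (mk_mem_prod hau hav) le_rfl⟩

theorem iInter_lowerClosure_subset_lowerClosure_iInter [ClosedIciTopology E] {ι : Type*}
    [Nonempty ι] {S : ι → Set E} (hS : Directed (· ⊇ ·) S) (hSc : ∀ i, IsCompact (S i))
    (hScl : ∀ i, IsClosed (S i)) :
    ⋂ i, (lowerClosure (S i) : Set E) ⊆ lowerClosure (⋂ i, S i) := by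
  intro y hy
  obtain ⟨a, ha⟩ := IsCompact.nonempty_iInter_of_directed_nonempty_isCompact_isClosed
    (fun i => S i ∩ Ici y)
    (fun i j => (hS i j).imp fun _ hk =>
      ⟨inter_subset_inter_left _ hk.1, inter_subset_inter_left _ hk.2⟩)
    (fun i => let ⟨a, ha, hya⟩ := mem_iInter.1 hy i; ⟨a, ha, hya⟩)
    (fun i => (hSc i).inter_right isClosed_Ici) (fun i => (hScl i).inter isClosed_Ici)
  simp only [mem_iInter, mem_inter_iff] at ha
  exact ⟨a, mem_iInter.2 fun i => (ha i).1, (ha (Classical.arbitrary ι)).2⟩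

theorem iInter_upperClosure_subset_upperClosure_iInter [ClosedIicTopology E] {ι : Type*}
    [Nonempty ι] {S : ι → Set E} (hS : Directed (· ⊇ ·) S) (hSc : ∀ i, IsCompact (S i))
    (hScl : ∀ i, IsClosed (S i)) :
    ⋂ i, (upperClosure (S i) : Set E) ⊆ upperClosure (⋂ i, S i) :=
  iInter_lowerClosure_subset_lowerClosure_iInter (E := Eᵒᵈ) hS hSc hScl

end OrderClosed

section NeighborhoodBases

variable {E : Type*} [TopologicalSpace E] [Preorder E] [OrderClosedTopology E] {x : E}

theorem iInter_closure_nhds_subset_Icc : ⋂ U : {U // U ∈ 𝓝 x}, closure U.1 ⊆ Icc x x :=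
  fun _ ha => ClusterPt.mem_Icc_of_nhds <|
    clusterPt_iff_forall_mem_closure.2 fun U hU => mem_iInter.1 ha ⟨U, hU⟩

theorem exists_cCompact_nhds_subset (hx : ∀ y ∈ Icc x x, y ⤳ x) {K : Set E} (hKx : K ∈ 𝓝 x)
    (hK : IsCompact K) (hKc : IsCSet K) {O : Set E} (hO : O ∈ 𝓝 x) :
    ∃ N ∈ 𝓝 x, IsCompact N ∧ IsCSet N ∧ N ⊆ O := by
  let S : {U // U ∈ 𝓝 x} → Set E := fun U => closure U.1 ∩ K
  let N : {U // U ∈ 𝓝 x} → Set E := fun U => lowerClosure (S U) ∩ upperClosure (S U)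
  have hSc : ∀ U, IsCompact (S U) := fun U => hK.inter_left isClosed_closure
  have hScl : ∀ U, IsClosed (S U) := fun U => isClosed_closure.inter hKc.isClosed
  have hSdir : Directed (· ⊇ ·) S := fun U V => ⟨⟨U.1 ∩ V.1, inter_mem U.2 V.2⟩,
    inter_subset_inter_left _ (closure_mono inter_subset_left),
    inter_subset_inter_left _ (closure_mono inter_subset_right)⟩
  have hNdir : Directed (· ⊇ ·) N := fun U V => (hSdir U V).imp fun _ h =>
    ⟨inter_subset_inter (lowerClosure_mono h.1) (upperClosure_anti h.1),
      inter_subset_inter (lowerClosure_mono h.2) (upperClosure_anti h.2)⟩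
  have hNc : ∀ U, IsCSet (N U) := fun U => (hSc U).isCSet_lowerClosure_inter_upperClosure
  have hNK : ∀ U, N U ⊆ K := fun U =>
    hKc.ordConnected.lowerClosure_inter_upperClosure_subset inter_subset_right
  have hNcpt : ∀ U, IsCompact (N U) := fun U => hK.of_isClosed_subset (hNc U).isClosed (hNK U)
  have hNx : ∀ U, N U ∈ 𝓝 x := fun U => mem_of_superset (inter_mem U.2 hKx) fun y hy =>
    have hyS : y ∈ S U := ⟨subset_closure hy.1, hy.2⟩
    ⟨subset_lowerClosure hyS, subset_upperClosure hyS⟩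
  have hSx : ⋂ U, S U ⊆ Icc x x :=
    (iInter_mono fun _ => inter_subset_left).trans iInter_closure_nhds_subset_Icc
  have hNInter : ⋂ U, N U ⊆ Icc x x := fun y hy => by
    obtain ⟨a, ha, hya⟩ := iInter_lowerClosure_subset_lowerClosure_iInter hSdir hSc hScl
      (mem_iInter.2 fun U => (mem_iInter.1 hy U).1)
    obtain ⟨b, hb, hby⟩ := iInter_upperClosure_subset_upperClosure_iInter hSdir hSc hScl
      (mem_iInter.2 fun U => (mem_iInter.1 hy U).2)
    exact ⟨(hSx hb).1.trans hby, hya.trans (hSx ha).2⟩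
  obtain ⟨U, hU⟩ := exists_subset_nhds_of_isCompact' hNdir hNcpt (fun U => (hNc U).isClosed)
    fun y hy => hx y (hNInter hy) hO
  exact ⟨N U, hNx U, hNcpt U, hNc U, hU⟩

theorem IsCompact.exists_subset_union_notMem_lowerClosure_upperClosure {C : Set E}
    (hC : IsCompact C) (hCx : Disjoint C (Icc x x)) :
    ∃ C₁ C₂ : Set E, IsCompact C₁ ∧ IsCompact C₂ ∧ C ⊆ C₁ ∪ C₂ ∧
      x ∉ lowerClosure C₁ ∧ x ∉ upperClosure C₂ := by
  obtain ⟨u, v, hu, hv, hsu, htv, huv⟩ :=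
    (hC.inter_right isClosed_Ici).exists_isOpen_disjoint_of_forall_not_le
      (hC.inter_right (isClosed_Iic (a := x))) fun a ha b hb hab =>
        disjoint_left.1 hCx ha.1 ⟨ha.2, hab.trans hb.2⟩
  refine ⟨C \ u, C \ v, hC.diff hu, hC.diff hv, fun y hy => ?_, ?_, ?_⟩
  · by_cases hyu : y ∈ u
    · exact Or.inr ⟨hy, disjoint_left.1 huv hyu⟩
    · exact Or.inl ⟨hy, hyu⟩
  · rintro ⟨c, hc, hxc⟩
    exact hc.2 (hsu ⟨hc.1, hxc⟩)
  · rintro ⟨c, hc, hcx⟩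
    exact hc.2 (htv ⟨hc.1, hcx⟩)

theorem exists_isOpen_ordConnected_subset (hx : ∀ y ∈ Icc x x, y ⤳ x) {N : Set E}
    (hNx : N ∈ 𝓝 x) (hN : IsCompact N) (hNc : IsCSet N) :
    ∃ W, IsOpen W ∧ x ∈ W ∧ W.OrdConnected ∧ W ⊆ N := by
  have hxN : Icc x x ⊆ interior N := fun y hy => mem_interior_iff_mem_nhds.2 (hx y hy hNx)
  obtain ⟨C₁, C₂, hC₁, hC₂, hC, hxC₁, hxC₂⟩ :=
    (hN.diff isOpen_interior).exists_subset_union_notMem_lowerClosure_upperClosure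
      (disjoint_left.2 fun _ hy hy' => hy.2 (hxN hy'))
  let V : Set E := (lowerClosure C₁ : Set E)ᶜ ∩ (upperClosure C₂ : Set E)ᶜ
  have hV : IsOpen V :=
    hC₁.isClosed_lowerClosure_s10.isOpen_compl.inter hC₂.isClosed_upperClosure.isOpen_compl
  have hVconv : V.OrdConnected :=
    (lowerClosure C₁).lower.compl.ordConnected.inter (upperClosure C₂).upper.compl.ordConnected
  have hNV : N ∩ V = interior N ∩ V := by
    refine subset_antisymm (fun y hy => ⟨?_, hy.2⟩) (inter_subset_inter_left _ interior_subset)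
    by_contra hyN
    rcases hC ⟨hy.1, hyN⟩ with h | h
    · exact hy.2.1 (subset_lowerClosure h)
    · exact hy.2.2 (subset_upperClosure h)
  exact ⟨N ∩ V, hNV ▸ isOpen_interior.inter hV, ⟨mem_of_mem_nhds hNx, hxC₁, hxC₂⟩,
    hNc.ordConnected.inter hVconv, inter_subset_left⟩

end NeighborhoodBases

/-- In a closed preordered space, if the topology does not distinguish the
points of `[x] = d(x) ∩ i(x)` and `x` admits a c-compact neighborhood, then the
c-compact neighborhoods of `x` form a base of the neighborhood filter at `x`
and the space is weakly convex at `x`. -/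
theorem cCompact_basis_of_cCompact_nbhd {E : Type*} [TopologicalSpace E] [Preorder E]
    (hG : IsClosed {p : E × E | p.1 ≤ p.2}) (x : E)
    (hindist : ∀ O : Set E, IsOpen O →
      (∃ y ∈ decHull {x} ∩ incHull {x}, y ∈ O) → decHull {x} ∩ incHull {x} ⊆ O)
    (hc : ∃ N ∈ 𝓝 x, IsCompact N ∧ IsCSet N) :
    (∀ O ∈ 𝓝 x, ∃ N ∈ 𝓝 x, IsCompact N ∧ IsCSet N ∧ N ⊆ O) ∧
    (∀ O ∈ 𝓝 x, ∃ N ∈ 𝓝 x, IsOpen N ∧ IsOrdConvex N ∧ N ⊆ O) := by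
  have : OrderClosedTopology E := ⟨hG⟩
  rw [decHull_singleton_inter_incHull_singleton] at hindist
  have hx : ∀ y ∈ Icc x x, y ⤳ x := fun y hy => specializes_iff_forall_open.2 fun O hO hxO =>
    hindist O hO ⟨x, left_mem_Icc.2 le_rfl, hxO⟩ hy
  obtain ⟨K, hKx, hK, hKc⟩ := hc
  have hbasis := fun O (hO : O ∈ 𝓝 x) => exists_cCompact_nhds_subset hx hKx hK hKc hO
  refine ⟨hbasis, fun O hO => ?_⟩
  obtain ⟨N, hNx, hN, hNc, hNO⟩ := hbasis O hO
  obtain ⟨W, hW, hxW, hWconv, hWN⟩ := exists_isOpen_ordConnected_subset hx hNx hN hNc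
  exact ⟨W, hW.mem_nhds hxW, hW, isOrdConvex_iff_ordConnected.2 hWconv, hWN.trans hNO⟩
end

section
/- Let E be a compactly generated closed preordered space with reflexive generating relation R, and let K ⊆ E be compact. If x ≤ z with x ∈ Int(K) and z ∉ closure(R(K)), then there exists y ∈ closure(R(K)) \ Int(K) such that x ≤ y ≤ z. -/
/-- The image `R(K) = {y | ∃ x ∈ K, (x,y) ∈ R}` of a set under a relation. -/
def relImage {E : Type*} (R : Set (E × E)) (K : Set E) : Set E :=
  {y | ∃ x ∈ K, (x, y) ∈ R}

/-!
Let `U = Int K` and `C = closure (R(K))`. Consider the relation `T` of pairs `a ≤ b` such that,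
whenever `a ∈ U`, either `b ∈ C` or some `y ∈ C \ U` satisfies `a ≤ y ≤ b`. It contains `R`, and
it is transitive: a chain starting in `U` can only reach a point outside `U` by stepping onto
`C \ U`. It is closed because `C \ U` is compact, so the existential quantifier over `y` is a
projection along a compact factor. By minimality of `≤`, `T` contains `(x, z)`, and `z ∉ C` forces
the intermediate point.
-/

section ExitRelation

variable {E : Type*}

theorem relImage_mono {R : Set (E × E)} {K L : Set E} (h : K ⊆ L) : relImage R K ⊆ relImage R L :=
  fun _ ⟨x, hx, hxy⟩ => ⟨x, h hx, hxy⟩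

section LE

variable [LE E]

def leThrough (D : Set E) : Set (E × E) :=
  {p | ∃ y ∈ D, p.1 ≤ y ∧ y ≤ p.2}

def leExitThrough (U C : Set E) : Set (E × E) :=
  {p | p.1 ≤ p.2 ∧ (p.1 ∈ U → p.2 ∈ C ∨ p ∈ leThrough (C \ U))}

theorem leExitThrough_eq (U C : Set E) :
    leExitThrough U C = {p : E × E | p.1 ≤ p.2} ∩
      (Uᶜ ×ˢ Set.univ ∪ Set.univ ×ˢ C ∪ leThrough (C \ U)) := by
  ext ⟨a, b⟩
  simp only [leExitThrough, Set.mem_ofPred_eq, Set.mem_inter_iff, Set.mem_union, Set.mem_prod,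
    Set.mem_compl_iff, Set.mem_univ, and_true, true_and]
  tauto

theorem subset_leExitThrough {R : Set (E × E)} {U C : Set E}
    (hRle : R ⊆ {p : E × E | p.1 ≤ p.2}) (hRC : relImage R U ⊆ C) :
    R ⊆ leExitThrough U C :=
  fun p hp => ⟨hRle hp, fun ha => Or.inl (hRC ⟨p.1, ha, hp⟩)⟩

variable [TopologicalSpace E]

theorem IsCompact.isClosed_leThrough (hG : IsClosed {p : E × E | p.1 ≤ p.2}) {D : Set E}
    (hD : IsCompact D) : IsClosed (leThrough D) := by
  have : CompactSpace D := isCompact_iff_compactSpace.mp hD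
  have hW : IsClosed {q : D × (E × E) | q.2.1 ≤ q.1 ∧ (q.1 : E) ≤ q.2.2} :=
    (hG.preimage (by fun_prop : Continuous fun q : D × (E × E) => (q.2.1, (q.1 : E)))).inter
      (hG.preimage (by fun_prop : Continuous fun q : D × (E × E) => ((q.1 : E), q.2.2)))
  convert isClosedMap_snd_of_compactSpace _ hW using 1
  ext ⟨a, b⟩
  simp [leThrough, and_left_comm]

theorem isClosed_leExitThrough (hG : IsClosed {p : E × E | p.1 ≤ p.2}) {U C : Set E}
    (hU : IsOpen U) (hC : IsClosed C) (hCU : IsCompact (C \ U)) :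
    IsClosed (leExitThrough U C) := by
  rw [leExitThrough_eq]
  exact hG.inter (((hU.isClosed_compl.prod isClosed_univ).union (isClosed_univ.prod hC)).union
    (hCU.isClosed_leThrough hG))

end LE

theorem leExitThrough_trans [Preorder E] {U C : Set E} {a b c : E}
    (hab : (a, b) ∈ leExitThrough U C) (hbc : (b, c) ∈ leExitThrough U C) :
    (a, c) ∈ leExitThrough U C := by
  refine ⟨hab.1.trans hbc.1, fun ha => ?_⟩
  rcases hab.2 ha with hbC | ⟨y, hy, hay, hyb⟩
  · by_cases hb : b ∈ U
    · rcases hbc.2 hb with hcC | ⟨y, hy, hby, hyc⟩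
      · exact Or.inl hcC
      · exact Or.inr ⟨y, hy, hab.1.trans hby, hyc⟩
    · exact Or.inr ⟨b, ⟨hbC, hb⟩, hab.1, hbc.1⟩
  · exact Or.inr ⟨y, hy, hay, hyb.trans hbc.1⟩

end ExitRelation

/-- In a compactly generated closed preordered space with reflexive generating
relation `R`, if `x ≤ z`, `x ∈ Int K` and `z ∉ closure (R(K))` for a compact
`K`, then there is `y ∈ closure (R(K)) \ Int K` with `x ≤ y ≤ z`. -/
theorem exists_intermediate_point {E : Type*} [TopologicalSpace E] [Preorder E]
    (hG : IsClosed {p : E × E | p.1 ≤ p.2})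
    (R : Set (E × E))
    (hRsub : R ⊆ {p : E × E | p.1 ≤ p.2})
    (hRrefl : ∀ a : E, (a, a) ∈ R)
    (hRk : ∀ K : Set E, IsCompact K → IsCompact (closure (relImage R K)))
    (hmin : ∀ T : Set (E × E), IsClosed T → (∀ a : E, (a, a) ∈ T) →
      (∀ a b c : E, (a, b) ∈ T → (b, c) ∈ T → (a, c) ∈ T) → R ⊆ T →
      {p : E × E | p.1 ≤ p.2} ⊆ T)
    (K : Set E) (hK : IsCompact K)
    (x z : E) (hxz : x ≤ z)
    (hx : x ∈ interior K) (hz : z ∉ closure (relImage R K)) :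
    ∃ y ∈ closure (relImage R K) \ interior K, x ≤ y ∧ y ≤ z := by
  set C := closure (relImage R K)
  have hCU : IsCompact (C \ interior K) :=
    (hRk K hK).of_isClosed_subset (isClosed_closure.sdiff isOpen_interior) Set.sdiff_subset
  have hRT : R ⊆ leExitThrough (interior K) C := subset_leExitThrough hRsub
    ((relImage_mono interior_subset).trans subset_closure)
  have hxzT : (x, z) ∈ leExitThrough (interior K) C :=
    hmin _ (isClosed_leExitThrough hG isOpen_interior isClosed_closure hCU)
      (fun a => hRT (hRrefl a)) (fun _ _ _ => leExitThrough_trans) hRT hxz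
  exact (hxzT.2 hx).resolve_left hz
end
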